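/- Equivalence of the MILP model and the TOP: suppose every component size satisfies s c ≥ 1 and fix k : ℕ. There exist 0/1-valued x : C → Fin T → ℕ, y : Fin T → ℕ, z : P → Fin T → ℕ satisfying constraints (i)–(iv) of the MILP model with ∑_{t} y t ≤ k if and only if there exists a capacity-feasible loading f : C → Fin T respecting the PCB limits whose range contains at most k distinct trolleys. -/

import Mathlib

/-!
Over `ℕ`, row sums equal to one force `x` to be the assignment matrix of a loading `f`
(`x c t = 1 ↔ f c = t`), and every loading has such a matrix. Under this dictionary
constraint (ii) reads `load t ≤ y t * N`; since all sizes are positive, a used trolley has positive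
load and so forces `y t = 1`, while constraint (iv) makes `z p` the indicator of the trolleys used
by PCB `p`. Counting used trolleys is then the same as summing these indicators.
-/

open Finset

/-- The load of trolley `t` under loading `f` with component sizes `s`. -/
def trolleyLoad {C : Type*} [Fintype C] {k : ℕ} (s : C → ℕ) (f : C → Fin k)
    (t : Fin k) : ℕ :=
  ∑ c ∈ Finset.univ.filter (fun c => f c = t), s c

def assignmentMatrix {C T : Type*} [DecidableEq T] (f : C → T) (c : C) (t : T) : ℕ :=
  if f c = t then 1 else 0

section assignmentMatrix

variable {C T : Type*} [DecidableEq T]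

@[simp]
lemma assignmentMatrix_eq_one_iff {f : C → T} {c : C} {t : T} :
    assignmentMatrix f c t = 1 ↔ f c = t := by
  simp [assignmentMatrix]

lemma assignmentMatrix_eq_zero_or_eq_one (f : C → T) (c : C) (t : T) :
    assignmentMatrix f c t = 0 ∨ assignmentMatrix f c t = 1 :=
  (ite_eq_or_eq _ 1 0).symm

lemma sum_assignmentMatrix [Fintype T] (f : C → T) (c : C) : ∑ t, assignmentMatrix f c t = 1 := by
  simp [assignmentMatrix]

lemma exists_eq_ite_of_sum_eq_one [Fintype T] {x : T → ℕ} (hx : ∑ t, x t = 1) :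
    ∃ i, ∀ t, x t = if i = t then 1 else 0 := by
  obtain ⟨i, -, hi⟩ := exists_ne_zero_of_sum_ne_zero (hx ▸ one_ne_zero)
  have hsplit := add_sum_erase univ x (mem_univ i)
  rw [hx] at hsplit
  have hrest : ∑ t ∈ univ.erase i, x t = 0 := by omega
  refine ⟨i, fun t => ?_⟩
  split_ifs with hit
  · subst hit; omega
  · exact sum_eq_zero_iff.mp hrest t (mem_erase.mpr ⟨Ne.symm hit, mem_univ t⟩)

lemma exists_eq_assignmentMatrix [Fintype T] {x : C → T → ℕ} (hx : ∀ c, ∑ t, x c t = 1) :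
    ∃ f : C → T, x = assignmentMatrix f := by
  choose f hf using fun c => exists_eq_ite_of_sum_eq_one (hx c)
  exact ⟨f, funext₂ hf⟩

end assignmentMatrix

section trolleyLoad

variable {C : Type*} [Fintype C] {T : ℕ} (s : C → ℕ) (f : C → Fin T)

lemma sum_assignmentMatrix_mul (t : Fin T) :
    ∑ c, assignmentMatrix f c t * s c = trolleyLoad s f t := by
  simp [assignmentMatrix, trolleyLoad, sum_filter]

lemma one_le_trolleyLoad (hs : ∀ c, 1 ≤ s c) {c : C} : 1 ≤ trolleyLoad s f (f c) :=
  (hs c).trans <| single_le_sum (fun _ _ => Nat.zero_le _) (by simp)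

lemma trolleyLoad_eq_zero {t : Fin T} (ht : t ∉ univ.image f) : trolleyLoad s f t = 0 := by
  simp_all [trolleyLoad]

end trolleyLoad

lemma card_le_sum_of_one_le {ι : Type*} [Fintype ι] {A : Finset ι} {g : ι → ℕ}
    (h : ∀ i ∈ A, 1 ≤ g i) : #A ≤ ∑ i, g i :=
  calc #A ≤ ∑ i ∈ A, g i := by simpa using card_nsmul_le_sum A g 1 h
    _ ≤ ∑ i, g i := sum_le_sum_of_subset (subset_univ A)

lemma sum_ite_mem_eq_card {ι : Type*} [Fintype ι] [DecidableEq ι] (A : Finset ι) :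
    ∑ i, (if i ∈ A then 1 else 0) = #A := by
  simp

theorem milp_iff_top_general
    {C P : Type*} [Fintype C]
    (s : C → ℕ) (hs : ∀ c, 1 ≤ s c) (N T : ℕ) (S : P → Finset C) (l : P → ℕ)
    (k : ℕ) :
    (∃ (x : C → Fin T → ℕ) (y : Fin T → ℕ) (z : P → Fin T → ℕ),
        (∀ c t, x c t = 0 ∨ x c t = 1) ∧
        (∀ t, y t = 0 ∨ y t = 1) ∧
        (∀ p t, z p t = 0 ∨ z p t = 1) ∧
        (∀ c, ∑ t, x c t = 1) ∧
        (∀ t, ∑ c, x c t * s c ≤ y t * N) ∧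
        (∀ p, ∑ t, z p t ≤ l p) ∧
        (∀ p t, z p t = 1 ↔ ∃ c ∈ S p, x c t = 1) ∧
        (∑ t, y t) ≤ k) ↔
      (∃ f : C → Fin T,
        (∀ t, trolleyLoad s f t ≤ N) ∧
        (∀ p, ((S p).image f).card ≤ l p) ∧
        (Finset.univ.image f).card ≤ k) := by
  constructor
  · rintro ⟨x, y, z, -, hy, -, hrow, hcap, hlim, hz, hyk⟩
    obtain ⟨f, rfl⟩ := exists_eq_assignmentMatrix hrow
    simp only [sum_assignmentMatrix_mul] at hcap
    refine ⟨f, fun t => (hcap t).trans ?_, fun p => ?_, ?_⟩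
    · rcases hy t with h | h <;> simp [h]
    · refine (card_le_sum_of_one_le fun t ht => ?_).trans (hlim p)
      obtain ⟨c, hc, rfl⟩ := mem_image.mp ht
      exact ((hz p (f c)).mpr ⟨c, hc, by simp⟩).ge
    · refine (card_le_sum_of_one_le fun t ht => ?_).trans hyk
      obtain ⟨c, -, rfl⟩ := mem_image.mp ht
      have hpos := (one_le_trolleyLoad s f hs).trans (hcap (f c))
      have hy0 : y (f c) ≠ 0 := fun h => by simp [h] at hpos
      exact ((hy (f c)).resolve_left hy0).ge
  · rintro ⟨f, hcap, hlim, hk⟩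
    refine ⟨assignmentMatrix f, fun t => if t ∈ univ.image f then 1 else 0,
      fun p t => if t ∈ (S p).image f then 1 else 0, assignmentMatrix_eq_zero_or_eq_one f,
      fun _ => (ite_eq_or_eq _ 1 0).symm, fun _ _ => (ite_eq_or_eq _ 1 0).symm,
      sum_assignmentMatrix f, fun t => ?_, fun p => (sum_ite_mem_eq_card _).trans_le (hlim p),
      by simp, (sum_ite_mem_eq_card _).trans_le hk⟩
    rw [sum_assignmentMatrix_mul]
    beta_reduce
    split_ifs with ht
    · simpa using hcap t
    · simp [trolleyLoad_eq_zero s f ht]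

/-- equivalence of the MILP model and the TOP: assuming every
component size is at least 1, there exist 0/1-valued `x, y, z` satisfying
constraints (i)–(iv) with `∑ t, y t ≤ k` iff there exists a capacity-feasible
loading `f : C → Fin T` respecting the PCB limits using at most `k` distinct
trolleys. -/
theorem milp_iff_top
    {C P : Type*} [Fintype C] [Fintype P] [DecidableEq C]
    (s : C → ℕ) (hs : ∀ c, 1 ≤ s c) (N T : ℕ) (S : P → Finset C) (l : P → ℕ)
    (k : ℕ) :
    (∃ (x : C → Fin T → ℕ) (y : Fin T → ℕ) (z : P → Fin T → ℕ),
        (∀ c t, x c t = 0 ∨ x c t = 1) ∧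
        (∀ t, y t = 0 ∨ y t = 1) ∧
        (∀ p t, z p t = 0 ∨ z p t = 1) ∧
        (∀ c, ∑ t, x c t = 1) ∧
        (∀ t, ∑ c, x c t * s c ≤ y t * N) ∧
        (∀ p, ∑ t, z p t ≤ l p) ∧
        (∀ p t, z p t = 1 ↔ ∃ c ∈ S p, x c t = 1) ∧
        (∑ t, y t) ≤ k) ↔
      (∃ f : C → Fin T,
        (∀ t, trolleyLoad s f t ≤ N) ∧
        (∀ p, ((S p).image f).card ≤ l p) ∧
        (Finset.univ.image f).card ≤ k) :=
  milp_iff_top_general s hs N T S l k
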